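/- Let f be in the Dirichlet space 𝒟 and w ∈ closed unit disc, and write f_w(z) = f(wz). Then ‖f_w - f‖_𝒟 ≤ |1-w| ‖f‖_𝒟 + ‖(f')_w - f'‖_{A²}, and for w ≠ 0, ‖(f')_w - f'‖_{A²} ≤ (|1-w|/|w|) ‖f‖_𝒟 + ‖f_w - f‖_𝒟. -/

import Mathlib

open Complex MeasureTheory Real Metric Set Filter Topology Asymptotics

/-- The p-th integral mean of `f` on the circle of radius `r`. -/
noncomputable def Mp (p : ℝ) (f : ℂ → ℂ) (r : ℝ) : ℝ :=
  ((1 / (2 * π)) * ∫ θ in (-π)..π, ‖f ((r : ℂ) * Complex.exp ((θ : ℂ) * Complex.I))‖ ^ p) ^ (1 / p)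

/-- The Hardy space norm `sup_{0 ≤ r < 1} M_p(r, f)`. -/
noncomputable def hardyNorm (p : ℝ) (f : ℂ → ℂ) : ℝ :=
  ⨆ r : Set.Ico (0 : ℝ) 1, Mp p f r

/-- Membership in the Hardy space `H^p`. -/
def MemHp (p : ℝ) (f : ℂ → ℂ) : Prop :=
  AnalyticOn ℂ f (ball (0 : ℂ) 1) ∧
    BddAbove (Set.range fun r : Set.Ico (0 : ℝ) 1 => Mp p f r)

/-- The Bergman space norm with respect to normalized area measure on the unit disc. -/
noncomputable def bergmanNorm (p : ℝ) (f : ℂ → ℂ) : ℝ :=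
  (π⁻¹ * ∫ z in ball (0 : ℂ) 1, ‖f z‖ ^ p) ^ (1 / p)

/-- The area integral mean `A_p(r, f) = ‖f_r‖_{A^p}`. -/
noncomputable def Ap (p : ℝ) (f : ℂ → ℂ) (r : ℝ) : ℝ :=
  bergmanNorm p (fun z => f ((r : ℂ) * z))

/-- Membership in the Bergman space `A^p`. -/
def MemAp (p : ℝ) (f : ℂ → ℂ) : Prop :=
  AnalyticOn ℂ f (ball (0 : ℂ) 1) ∧
    IntegrableOn (fun z => ‖f z‖ ^ p) (ball (0 : ℂ) 1) volume

/-- The Dirichlet space norm `(|f(0)|² + ‖f'‖_{A²}²)^{1/2}`. -/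
noncomputable def dirichletNorm (f : ℂ → ℂ) : ℝ :=
  Real.sqrt (‖f 0‖ ^ 2 + bergmanNorm 2 (deriv f) ^ 2)

/-- Membership in the Dirichlet space. -/
def MemD (f : ℂ → ℂ) : Prop :=
  AnalyticOn ℂ f (ball (0 : ℂ) 1) ∧ MemAp 2 (deriv f)

/-!
The derivative of `f_w - f` is `w (f')_w - f'`, and `f_w - f` vanishes at `0`, so both estimates
are triangle inequalities in `L²(𝔻)`: the first comes from
`w (f')_w - f' = w ((f')_w - f') + (w - 1) f'`, the second from
`(f')_w - f' = (1 - w) (f')_w + (w (f')_w - f')` together with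
`‖(f')_w‖_{A²} ≤ ‖f'‖_{A²} / |w|`, since `z ↦ w z` has Jacobian `|w|²` and maps `𝔻` into
`𝔻`.
-/

open scoped ENNReal

local notation "μ𝔻" => volume.restrict (ball (0 : ℂ) 1)

section Dilation

variable {E : Type*} [NormedAddCommGroup E]

theorem map_mul_left_restrict_ball_le {w : ℂ} (hw0 : w ≠ 0) (hw1 : ‖w‖ ≤ 1) :
    (μ𝔻).map (w * ·) ≤ ENNReal.ofReal (‖w‖ ^ 2)⁻¹ • μ𝔻 := by
  have hdet : LinearMap.det (Algebra.lmul ℝ ℂ w) = ‖w‖ ^ 2 := by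
    rw [← Algebra.norm_apply, Algebra.norm_complex_apply, Complex.normSq_eq_norm_sq]
  have hmap :
      (volume : Measure ℂ).map (w * ·) = ENNReal.ofReal (‖w‖ ^ 2)⁻¹ • volume := by
    have h := Measure.map_linearMap_addHaar_eq_smul_addHaar (volume : Measure ℂ)
      (f := Algebra.lmul ℝ ℂ w) (by rw [hdet]; positivity)
    rwa [hdet, abs_of_nonneg (by positivity)] at h
  have hpre : (w * ·) ⁻¹' ball (0 : ℂ) ‖w‖ = ball 0 1 := by
    ext z
    simp [mul_lt_iff_lt_one_right (norm_pos_iff.2 hw0)]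
  rw [← hpre, ← Measure.restrict_map (measurable_const_mul w) measurableSet_ball, hmap,
    Measure.restrict_smul, hpre]
  gcongr

theorem eLpNorm_comp_mul_left_le {w : ℂ} (hw0 : w ≠ 0) (hw1 : ‖w‖ ≤ 1) {g : ℂ → E}
    (hg : AEStronglyMeasurable g μ𝔻) (p : ℝ≥0∞) :
    eLpNorm (fun z => g (w * z)) p μ𝔻 ≤
      ENNReal.ofReal (‖w‖ ^ 2)⁻¹ ^ (1 / p).toReal * eLpNorm g p μ𝔻 := by
  have hle := map_mul_left_restrict_ball_le hw0 hw1
  rw [← Function.comp_def, ← eLpNorm_map_measure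
    (hg.mono_ac (Measure.absolutelyContinuous_of_le_smul hle))
    (measurable_const_mul w).aemeasurable]
  exact eLpNorm_le_of_measure_le_smul hle

theorem MeasureTheory.MemLp.comp_mul_left_ball {g : ℂ → E} {p : ℝ≥0∞}
    (hg : MemLp g p μ𝔻) {w : ℂ} (hw1 : ‖w‖ ≤ 1) : MemLp (fun z => g (w * z)) p μ𝔻 := by
  rcases eq_or_ne w 0 with rfl | hw0
  · have : IsFiniteMeasure μ𝔻 := isFiniteMeasure_restrict.2 measure_ball_lt_top.ne
    simpa only [zero_mul] using memLp_const (g 0)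
  · exact (hg.of_measure_le_smul ENNReal.ofReal_ne_top
      (map_mul_left_restrict_ball_le hw0 hw1)).comp_of_map (measurable_const_mul w).aemeasurable

end Dilation

section Bergman

variable {p : ℝ}

theorem bergmanNorm_nonneg (p : ℝ) (g : ℂ → ℂ) : 0 ≤ bergmanNorm p g := by
  unfold bergmanNorm
  positivity

theorem bergmanNorm_congr_ball {g h : ℂ → ℂ} (hgh : EqOn g h (ball 0 1)) :
    bergmanNorm p g = bergmanNorm p h := by
  unfold bergmanNorm
  rw [setIntegral_congr_fun measurableSet_ball fun z hz => by rw [hgh hz]]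

theorem bergmanNorm_const_mul (hp : 0 < p) (c : ℂ) (g : ℂ → ℂ) :
    bergmanNorm p (fun z => c * g z) = ‖c‖ * bergmanNorm p g := by
  simp only [bergmanNorm, norm_mul, Real.mul_rpow (norm_nonneg _) (norm_nonneg _),
    integral_const_mul]
  rw [mul_left_comm, Real.mul_rpow (by positivity) (by positivity),
    ← Real.rpow_mul (norm_nonneg _), mul_one_div_cancel hp.ne', Real.rpow_one]

theorem bergmanNorm_eq_toReal_eLpNorm (hp : 0 < p) {g : ℂ → ℂ}
    (hg : AEStronglyMeasurable g μ𝔻) :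
    bergmanNorm p g = π⁻¹ ^ (1 / p) * (eLpNorm g (ENNReal.ofReal p) μ𝔻).toReal := by
  rw [eLpNorm_eq_lintegral_rpow_enorm_toReal (by simpa) ENNReal.ofReal_ne_top,
    ENNReal.toReal_ofReal hp.le, ← ENNReal.toReal_rpow, bergmanNorm,
    Real.mul_rpow (by positivity) (integral_nonneg fun _ => by positivity),
    integral_eq_lintegral_of_nonneg_ae (.of_forall fun _ => by positivity)
      (hg.norm.aemeasurable.pow_const p).aestronglyMeasurable]
  congr 3
  refine lintegral_congr fun z => ?_
  rw [← ofReal_norm, ENNReal.ofReal_rpow_of_nonneg (norm_nonneg _) hp.le]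

theorem bergmanNorm_add_le (hp : 1 ≤ p) {g h : ℂ → ℂ} (hg : MemLp g (.ofReal p) μ𝔻)
    (hh : MemLp h (.ofReal p) μ𝔻) :
    bergmanNorm p (fun z => g z + h z) ≤ bergmanNorm p g + bergmanNorm p h := by
  have hp0 : 0 < p := by linarith
  change bergmanNorm p (g + h) ≤ _
  rw [bergmanNorm_eq_toReal_eLpNorm hp0 hg.1, bergmanNorm_eq_toReal_eLpNorm hp0 hh.1,
    bergmanNorm_eq_toReal_eLpNorm hp0 (hg.1.add hh.1), ← mul_add]
  gcongr
  exact ENNReal.toReal_le_add (eLpNorm_add_le hg.1 hh.1 (by simpa)) hg.eLpNorm_ne_top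
    hh.eLpNorm_ne_top

theorem bergmanNorm_comp_mul_left_le (hp : 0 < p) {w : ℂ} (hw0 : w ≠ 0) (hw1 : ‖w‖ ≤ 1)
    {g : ℂ → ℂ} (hg : MemLp g (.ofReal p) μ𝔻) :
    bergmanNorm p (fun z => g (w * z)) ≤ (‖w‖ ^ 2)⁻¹ ^ (1 / p) * bergmanNorm p g := by
  rw [bergmanNorm_eq_toReal_eLpNorm hp hg.1,
    bergmanNorm_eq_toReal_eLpNorm hp (hg.comp_mul_left_ball hw1).1, mul_left_comm]
  gcongr
  have hfin : ENNReal.ofReal (‖w‖ ^ 2)⁻¹ ^ (1 / ENNReal.ofReal p).toReal *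
      eLpNorm g (.ofReal p) μ𝔻 ≠ ∞ :=
    ENNReal.mul_ne_top (ENNReal.rpow_ne_top_of_nonneg ENNReal.toReal_nonneg ENNReal.ofReal_ne_top)
      hg.eLpNorm_ne_top
  refine (ENNReal.toReal_mono hfin (eLpNorm_comp_mul_left_le hw0 hw1 hg.1 _)).trans_eq ?_
  rw [ENNReal.toReal_mul, ← ENNReal.toReal_rpow, ENNReal.toReal_ofReal (by positivity), one_div,
    ENNReal.toReal_inv, ENNReal.toReal_ofReal hp.le, one_div]

theorem bergmanNorm_mul_comp_mul_left_sub_le (hp : 1 ≤ p) {u : ℂ → ℂ}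
    (hu : MemLp u (.ofReal p) μ𝔻) {w : ℂ} (hw1 : ‖w‖ ≤ 1) :
    bergmanNorm p (fun z => w * u (w * z) - u z) ≤
      ‖1 - w‖ * bergmanNorm p u + bergmanNorm p (fun z => u (w * z) - u z) := by
  have hp0 : 0 < p := by linarith
  have huw := hu.comp_mul_left_ball hw1
  calc bergmanNorm p (fun z => w * u (w * z) - u z)
      = bergmanNorm p (fun z => (w - 1) * u z + w * (u (w * z) - u z)) := by
        congr; funext z; ring
    _ ≤ ‖w - 1‖ * bergmanNorm p u + ‖w‖ * bergmanNorm p (fun z => u (w * z) - u z) := by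
        rw [← bergmanNorm_const_mul hp0, ← bergmanNorm_const_mul hp0]
        exact bergmanNorm_add_le hp (hu.const_mul _) ((huw.sub hu).const_mul w)
    _ ≤ ‖1 - w‖ * bergmanNorm p u + 1 * bergmanNorm p (fun z => u (w * z) - u z) := by
        rw [norm_sub_rev]
        gcongr
        exact bergmanNorm_nonneg _ _
    _ = _ := by rw [one_mul]

theorem bergmanNorm_comp_mul_left_sub_le (hp : 1 ≤ p) {u : ℂ → ℂ}
    (hu : MemLp u (.ofReal p) μ𝔻) {w : ℂ} (hw0 : w ≠ 0) (hw1 : ‖w‖ ≤ 1) :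
    bergmanNorm p (fun z => u (w * z) - u z) ≤
      ‖1 - w‖ * (‖w‖ ^ 2)⁻¹ ^ (1 / p) * bergmanNorm p u +
        bergmanNorm p (fun z => w * u (w * z) - u z) := by
  have hp0 : 0 < p := by linarith
  have huw := hu.comp_mul_left_ball hw1
  calc bergmanNorm p (fun z => u (w * z) - u z)
      = bergmanNorm p (fun z => (1 - w) * u (w * z) + (w * u (w * z) - u z)) := by
        congr; funext z; ring
    _ ≤ ‖1 - w‖ * bergmanNorm p (fun z => u (w * z)) +
          bergmanNorm p (fun z => w * u (w * z) - u z) := by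
        rw [← bergmanNorm_const_mul hp0]
        exact bergmanNorm_add_le hp (huw.const_mul _) ((huw.const_mul w).sub hu)
    _ ≤ _ := by
        rw [mul_assoc]
        gcongr
        exact bergmanNorm_comp_mul_left_le hp0 hw0 hw1 hu

end Bergman

theorem MemAp.memLp {p : ℝ} (hp : 0 < p) {g : ℂ → ℂ} (hg : MemAp p g) :
    MemLp g (.ofReal p) μ𝔻 := by
  refine (integrable_norm_rpow_iff (hg.1.continuousOn.aestronglyMeasurable measurableSet_ball)
    (by simpa) ENNReal.ofReal_ne_top).1 ?_
  rw [ENNReal.toReal_ofReal hp.le]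
  exact hg.2

theorem bergmanNorm_deriv_le_dirichletNorm (f : ℂ → ℂ) :
    bergmanNorm 2 (deriv f) ≤ dirichletNorm f :=
  (le_abs_self _).trans (Real.abs_le_sqrt (le_add_of_nonneg_left (sq_nonneg _)))

theorem dirichletNorm_of_apply_zero {g : ℂ → ℂ} (hg : g 0 = 0) :
    dirichletNorm g = bergmanNorm 2 (deriv g) := by
  rw [dirichletNorm, hg, norm_zero, zero_pow two_ne_zero, zero_add,
    Real.sqrt_sq (bergmanNorm_nonneg _ _)]

theorem deriv_comp_mul_left_sub {f : ℂ → ℂ} (hf : DifferentiableOn ℂ f (ball 0 1)) {w : ℂ}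
    (hw1 : ‖w‖ ≤ 1) {z : ℂ} (hz : z ∈ ball (0 : ℂ) 1) :
    deriv (fun z => f (w * z) - f z) z = w * deriv f (w * z) - deriv f z := by
  have hwz : w * z ∈ ball (0 : ℂ) 1 := by
    rw [mem_ball_zero_iff, norm_mul] at *
    nlinarith [norm_nonneg z]
  have hd : ∀ y ∈ ball (0 : ℂ) 1, HasDerivAt f (deriv f y) y := fun y hy =>
    (hf.differentiableAt (isOpen_ball.mem_nhds hy)).hasDerivAt
  refine ((((hd _ hwz).comp z ((hasDerivAt_id z).const_mul w)).sub (hd z hz)).deriv).trans ?_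
  simp only [mul_one]
  ring

theorem stmt18 (f : ℂ → ℂ) (hf : MemD f) (w : ℂ) (hw : w ∈ closedBall (0 : ℂ) 1) :
    dirichletNorm (fun z => f (w * z) - f z) ≤
        ‖1 - w‖ * dirichletNorm f + bergmanNorm 2 (fun z => deriv f (w * z) - deriv f z) ∧
    (w ≠ 0 →
      bergmanNorm 2 (fun z => deriv f (w * z) - deriv f z) ≤
        (‖1 - w‖ / ‖w‖) * dirichletNorm f + dirichletNorm (fun z => f (w * z) - f z)) := by
  have hw1 : ‖w‖ ≤ 1 := mem_closedBall_zero_iff.1 hw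
  have hu : MemLp (deriv f) (.ofReal 2) μ𝔻 := hf.2.memLp two_pos
  have hD : dirichletNorm (fun z => f (w * z) - f z) =
      bergmanNorm 2 (fun z => w * deriv f (w * z) - deriv f z) := by
    rw [dirichletNorm_of_apply_zero (by simp)]
    exact bergmanNorm_congr_ball fun z hz => deriv_comp_mul_left_sub hf.1.differentiableOn hw1 hz
  have hB : bergmanNorm 2 (deriv f) ≤ dirichletNorm f := bergmanNorm_deriv_le_dirichletNorm f
  refine ⟨?_, fun hw0 => ?_⟩
  · rw [hD]
    refine (bergmanNorm_mul_comp_mul_left_sub_le one_le_two hu hw1).trans ?_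
    gcongr
  · have hjac : (‖w‖ ^ 2)⁻¹ ^ (1 / 2 : ℝ) = ‖w‖⁻¹ := by
      rw [Real.inv_rpow (by positivity), ← Real.sqrt_eq_rpow, Real.sqrt_sq (norm_nonneg _)]
    rw [hD]
    refine (bergmanNorm_comp_mul_left_sub_le one_le_two hu hw0 hw1).trans ?_
    rw [hjac, ← div_eq_mul_inv]
    gcongr
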